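/- arXiv:1910.02164 — 3 statements merged into one kernel-verified Lean document; each statement's English description precedes it below -/
import Mathlib

section
/- For the product automaton A_pro: for every P ∈ Productive and every term t, there is exactly one run of A_pro over t whose root state has second component P, and its root state is (Reach(t), P). Dually, for every R ∈ Reachable and every context c, there is exactly one accepting run of A_pro over c whose hole state has first component R, and its hole state is (R, Prod(c)). -/
/-- A ranked alphabet: symbols with arities. -/
structure RankedAlphabet where
  symb : Type
  ar : symb → ℕ

/-- Terms (finite ranked trees) over a ranked alphabet. -/
inductive Term (A : RankedAlphabet) : Type where
  | node (a : A.symb) (ts : Fin (A.ar a) → Term A) : Term A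

/-- Height of a term: length of the longest branch. -/
def Term.height {A : RankedAlphabet} : Term A → ℕ
  | .node _ ts => Finset.univ.sup fun i => (ts i).height + 1

/-- Size of a term: number of nodes. -/
def Term.size {A : RankedAlphabet} : Term A → ℕ
  | .node _ ts => 1 + ∑ i, (ts i).size

/-- A nondeterministic tree automaton with real weights on transitions and final states. -/
structure WTA (A : RankedAlphabet) (Q : Type) where
  trans : (a : A.symb) → (Fin (A.ar a) → Q) → Q → Prop
  wt : (a : A.symb) → (Fin (A.ar a) → Q) → Q → ℝ
  final : Q → Prop
  fwt : Q → ℝ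

/-- Runs of an automaton over a term, reaching a given state at the root. -/
inductive RunOf {A : RankedAlphabet} {Q : Type} (M : WTA A Q) : Term A → Q → Type where
  | node (a : A.symb) (ts : Fin (A.ar a) → Term A) (qs : Fin (A.ar a) → Q) (q : Q)
      (hq : M.trans a qs q) (rs : ∀ i, RunOf M (ts i) (qs i)) : RunOf M (.node a ts) q

/-- The weight of a run: sum of the weights of the transitions used. -/
def RunOf.wt {A : RankedAlphabet} {Q : Type} {M : WTA A Q} :
    {t : Term A} → {q : Q} → RunOf M t q → ℝ
  | _, _, .node a _ qs q _ rs => (∑ i, (rs i).wt) + M.wt a qs q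

/-- Contexts: terms with exactly one hole. -/
inductive Ctx (A : RankedAlphabet) : Type where
  | hole : Ctx A
  | node (a : A.symb) (i : Fin (A.ar a)) (c : Ctx A) (ts : Fin (A.ar a) → Term A) : Ctx A

/-- Plugging a term into the hole of a context. -/
def Ctx.plug {A : RankedAlphabet} : Ctx A → Term A → Term A
  | .hole, t => t
  | .node a i c ts, t => .node a (Function.update ts i (c.plug t))

/-- Composition of contexts: plugging the second context into the hole of the first. -/
def Ctx.comp {A : RankedAlphabet} : Ctx A → Ctx A → Ctx A
  | .hole, d => d
  | .node a i c ts, d => .node a i (c.comp d) ts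

/-- Iterated composition of a context with itself. -/
def Ctx.pow {A : RankedAlphabet} (m : Ctx A) : ℕ → Ctx A
  | 0 => .hole
  | n + 1 => m.comp (m.pow n)

/-- Runs over a context, from a state (at the hole) to a state (at the root). -/
inductive CRun {A : RankedAlphabet} {Q : Type} (M : WTA A Q) : Ctx A → Q → Q → Type where
  | hole (p : Q) : CRun M .hole p p
  | node (a : A.symb) (i : Fin (A.ar a)) (c : Ctx A) (ts : Fin (A.ar a) → Term A)
      (qs : Fin (A.ar a) → Q) (p q : Q)
      (hq : M.trans a qs q)
      (hc : CRun M c p (qs i))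
      (rs : ∀ j, j ≠ i → RunOf M (ts j) (qs j)) : CRun M (.node a i c ts) p q

/-- The weight of a run over a context. -/
def CRun.wt {A : RankedAlphabet} {Q : Type} {M : WTA A Q} :
    {c : Ctx A} → {p q : Q} → CRun M c p q → ℝ
  | _, _, _, .hole _ => 0
  | _, _, _, .node a i _ _ qs _ q _ hc rs =>
      (∑ j : {j // j ≠ i}, (rs j.1 j.2).wt) + M.wt a qs q + hc.wt

/-- Gluing a run over a context with a run over a term yields a run over the plugged term. -/
def CRun.glue {A : RankedAlphabet} {Q : Type} {M : WTA A Q} {t : Term A} :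
    {c : Ctx A} → {p q : Q} → CRun M c p q → RunOf M t p → RunOf M (c.plug t) q
  | _, _, _, .hole _, r => r
  | _, _, _, .node a i c ts qs _ q hq hc rs, r =>
      .node a (Function.update ts i (c.plug t)) qs q hq
        (fun j =>
          if h : j = i then
            cast (by subst h; rw [Function.update_self]) (CRun.glue hc r)
          else
            cast (congrArg (fun s => RunOf M s (qs j))
              (Function.update_of_ne h (c.plug t) ts).symm) (rs j h))

/-- Gluing runs over composed contexts. -/
def CRun.cglue {A : RankedAlphabet} {Q : Type} {M : WTA A Q} {d : Ctx A} {p : Q} :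
    {c : Ctx A} → {q r : Q} → CRun M c q r → CRun M d p q → CRun M (c.comp d) p r
  | _, _, _, .hole _, rd => rd
  | _, _, _, .node a i c ts qs _ r hq hc rs, rd =>
      .node a i (c.comp d) ts qs p r hq (hc.cglue rd) rs

/-- The `n`-fold iteration of a loop run over a context. -/
def CRun.pow {A : RankedAlphabet} {Q : Type} {M : WTA A Q} {m : Ctx A} {q : Q}
    (σ : CRun M m q q) : (n : ℕ) → CRun M (m.pow n) q q
  | 0 => .hole q
  | n + 1 => σ.cglue (σ.pow n)

/-- `x` is the weight of some accepting run of `M` over `t`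
(weight of the run plus the final-state weight). -/
def AccWeight {A : RankedAlphabet} {Q : Type} (M : WTA A Q) (t : Term A) (x : ℝ) : Prop :=
  ∃ (q : Q) (r : RunOf M t q), M.final q ∧ r.wt + M.fwt q = x

/-- `M` has some accepting run over `t`. -/
def HasAcc {A : RankedAlphabet} {Q : Type} (M : WTA A Q) (t : Term A) : Prop :=
  ∃ x, AccWeight M t x

/-- `f` is the max-plus semantics of `M`: `f t = ⊥` iff there is no accepting run,
and otherwise `f t` is the maximum weight of an accepting run. -/
def ComputesMax {A : RankedAlphabet} {Q : Type} (M : WTA A Q) (f : Term A → Option ℝ) : Prop :=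
  ∀ t, (f t = none ↔ ¬ HasAcc M t) ∧
    ∀ x, f t = some x → AccWeight M t x ∧ ∀ y, AccWeight M t y → y ≤ x

/-- `f` is the min-plus semantics of `M`. -/
def ComputesMin {A : RankedAlphabet} {Q : Type} (M : WTA A Q) (f : Term A → Option ℝ) : Prop :=
  ∀ t, (f t = none ↔ ¬ HasAcc M t) ∧
    ∀ x, f t = some x → AccWeight M t x ∧ ∀ y, AccWeight M t y → x ≤ y

/-- An automaton is unambiguous if every term has at most one accepting run. -/
def Unambiguous {A : RankedAlphabet} {Q : Type} (M : WTA A Q) : Prop :=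
  ∀ (t : Term A) (q q' : Q) (r : RunOf M t q) (r' : RunOf M t q'),
    M.final q → M.final q' → q = q' ∧ HEq r r'

/-- The order on `ℝ ∪ {⊥}` in which `⊥` is comparable only with itself. -/
def OLe : Option ℝ → Option ℝ → Prop
  | none, none => True
  | some x, some y => x ≤ y
  | _, _ => False

/-- Shifting a value of `ℝ ∪ {⊥}` by a real number. -/
def oshift (u : Option ℝ) (x : ℝ) : Option ℝ := u.map (· + x)

/-- The set of states reachable at the root by some run over `t`. -/
def reachSet {A : RankedAlphabet} {Q : Type} (M : WTA A Q) (t : Term A) : Set Q :=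
  {q | Nonempty (RunOf M t q)}

/-- The set of states at the hole from which there is an accepting run over the context `c`. -/
def prodSet {A : RankedAlphabet} {Q : Type} (M : WTA A Q) (c : Ctx A) : Set Q :=
  {p | ∃ q, M.final q ∧ Nonempty (CRun M c p q)}

section Bi
variable {A : RankedAlphabet} {Q1 Q2 : Type} (M1 : WTA A Q1) (M2 : WTA A Q2)

/-- Reachable states of the disjoint union of the two automata. -/
def biReach (t : Term A) : Set (Q1 ⊕ Q2) :=
  Sum.inl '' reachSet M1 t ∪ Sum.inr '' reachSet M2 t

/-- Productive states of the disjoint union of the two automata. -/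
def biProd (c : Ctx A) : Set (Q1 ⊕ Q2) :=
  Sum.inl '' prodSet M1 c ∪ Sum.inr '' prodSet M2 c

/-- Final states of the disjoint union of the two automata. -/
def biFinal : Set (Q1 ⊕ Q2) :=
  Sum.inl '' {q | M1.final q} ∪ Sum.inr '' {q | M2.final q}

/-- Transition relation of the disjoint union of the two automata. -/
def biTrans (a : A.symb) (qs : Fin (A.ar a) → Q1 ⊕ Q2) (q : Q1 ⊕ Q2) : Prop :=
  (∃ (qs' : Fin (A.ar a) → Q1) (q' : Q1),
      qs = Sum.inl ∘ qs' ∧ q = Sum.inl q' ∧ M1.trans a qs' q') ∨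
  (∃ (qs' : Fin (A.ar a) → Q2) (q' : Q2),
      qs = Sum.inr ∘ qs' ∧ q = Sum.inr q' ∧ M2.trans a qs' q')

/-- The family `Reachable` of sets of states of the form `Reach(t)`. -/
def ReachableSets : Set (Set (Q1 ⊕ Q2)) := {S | ∃ t, biReach M1 M2 t = S}

/-- The family `Productive` of sets of states of the form `Prod(c)`. -/
def ProductiveSets : Set (Set (Q1 ⊕ Q2)) := {S | ∃ c, biProd M1 M2 c = S}

/-- `t` refines `s` for `P` with shift `x`. -/
def Refines (P : Set (Q1 ⊕ Q2)) (t s : Term A) (x : ℝ) : Prop :=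
  biReach M1 M2 s = biReach M1 M2 t ∧
  (∀ p : Q1, Sum.inl p ∈ P → ∀ ρ : RunOf M1 s p, ∃ ρ' : RunOf M1 t p, ρ.wt ≤ ρ'.wt + x) ∧
  (∀ q : Q2, Sum.inr q ∈ P → ∀ τ : RunOf M2 s q, ∃ τ' : RunOf M2 t q, τ'.wt + x ≤ τ.wt)

end Bi

/-- Transitions of the product automaton `A_pro`, relative to a transition relation `Δ`. -/
def ProTrans {A : RankedAlphabet} {Q : Type}
    (Δ : ∀ a : A.symb, (Fin (A.ar a) → Q) → Q → Prop) (a : A.symb)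
    (RPs : Fin (A.ar a) → Set Q × Set Q) (RP : Set Q × Set Q) : Prop :=
  RP.1 = {r | ∃ rs, Δ a rs r ∧ ∀ j, rs j ∈ (RPs j).1} ∧
  ∀ i, (RPs i).2 =
    {ri | ∃ rs p, Δ a rs p ∧ rs i = ri ∧ (∀ j, j ≠ i → rs j ∈ (RPs j).1) ∧ p ∈ RP.2}

/-- Reachable-sets of a single automaton. -/
def ReachableS {A : RankedAlphabet} {Q : Type} (M : WTA A Q) : Set (Set Q) :=
  {S | ∃ t, reachSet M t = S}

/-- Productive-sets of a single automaton. -/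
def ProductiveS {A : RankedAlphabet} {Q : Type} (M : WTA A Q) : Set (Set Q) :=
  {S | ∃ c, prodSet M c = S}

/-- The product automaton `A_pro`, computing reachable sets bottom-up and productive
sets top-down; its states are pairs `(R, P)` with `R ∈ Reachable` and `P ∈ Productive`,
its final states are those with `P = F`. (It carries trivial weights.) -/
def Apro {A : RankedAlphabet} {Q : Type} (M : WTA A Q) : WTA A (Set Q × Set Q) where
  trans a sts out :=
    ProTrans M.trans a sts out ∧
    (out.1 ∈ ReachableS M ∧ out.2 ∈ ProductiveS M) ∧
    ∀ i, (sts i).1 ∈ ReachableS M ∧ (sts i).2 ∈ ProductiveS M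
  wt _ _ _ := 0
  final S := S.2 = {q | M.final q} ∧ S.1 ∈ ReachableS M
  fwt _ := 0

/-! A run of `A_pro` is forced: by induction from the leaves, the first component at every
node is the reachable set of the subterm below it, and then, from the root downwards, the
transition relation leaves no choice for the second components of the children. Existence
comes from labelling each node with its reachable set and with the productive set of the
context surrounding it. Over a context the same argument is relativised: the first component
at the root consists of the states reachable over the context from the first component at the
hole, and the second component at the hole of the states from which the context can be run
into the second component at the root. -/

section ProductAutomaton

variable {A : RankedAlphabet} {Q : Type} (M : WTA A Q)

lemma Ctx.comp_hole (c : Ctx A) : c.comp .hole = c := by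
  induction c with
  | hole => rfl
  | node a i c ts ih => rw [Ctx.comp, ih]

lemma Ctx.comp_assoc (c d e : Ctx A) : (c.comp d).comp e = c.comp (d.comp e) := by
  induction c with
  | hole => rfl
  | node a i c ts ih => rw [Ctx.comp, Ctx.comp, Ctx.comp, ih]

def reachStep (a : A.symb) (Rs : Fin (A.ar a) → Set Q) : Set Q :=
  {r | ∃ rs, M.trans a rs r ∧ ∀ j, rs j ∈ Rs j}

def prodStep (a : A.symb) (i : Fin (A.ar a)) (Rs : Fin (A.ar a) → Set Q) (P : Set Q) :
    Set Q :=
  {ri | ∃ rs p, M.trans a rs p ∧ rs i = ri ∧ (∀ j, j ≠ i → rs j ∈ Rs j) ∧ p ∈ P}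

lemma prodStep_congr {a : A.symb} {i : Fin (A.ar a)} {Rs Rs' : Fin (A.ar a) → Set Q}
    (h : ∀ j, j ≠ i → Rs j = Rs' j) (P : Set Q) :
    prodStep M a i Rs P = prodStep M a i Rs' P := by
  ext x
  constructor <;> rintro ⟨rs, p, hrs, hi, hj, hp⟩
  · exact ⟨rs, p, hrs, hi, fun j hji => h j hji ▸ hj j hji, hp⟩
  · exact ⟨rs, p, hrs, hi, fun j hji => (h j hji).symm ▸ hj j hji, hp⟩

lemma ProTrans.eq_of_fst_eq {a : A.symb} {qs qs' : Fin (A.ar a) → Set Q × Set Q}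
    {S : Set Q × Set Q} (h : ProTrans M.trans a qs S) (h' : ProTrans M.trans a qs' S)
    (hfst : ∀ j, (qs j).1 = (qs' j).1) : qs = qs' := by
  funext j
  refine Prod.ext (hfst j) ?_
  rw [h.2 j, h'.2 j]
  simp only [hfst]

lemma reachSet_node (a : A.symb) (ts : Fin (A.ar a) → Term A) :
    reachSet M (.node a ts) = reachStep M a (fun j => reachSet M (ts j)) := by
  ext q
  constructor
  · rintro ⟨⟨_, _, qs, _, hq, rs⟩⟩
    exact ⟨qs, hq, fun j => ⟨rs j⟩⟩
  · rintro ⟨qs, hq, hrs⟩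
    exact ⟨.node a ts qs q hq fun j => (hrs j).some⟩

def ctxReach (c : Ctx A) (R : Set Q) : Set Q :=
  {q | ∃ p ∈ R, Nonempty (CRun M c p q)}

def ctxProd (c : Ctx A) (P : Set Q) : Set Q :=
  {p | ∃ q ∈ P, Nonempty (CRun M c p q)}

lemma ctxReach_hole (R : Set Q) : ctxReach M .hole R = R := by
  ext q
  constructor
  · rintro ⟨p, hp, ⟨⟨⟩⟩⟩
    exact hp
  · exact fun hq => ⟨q, hq, ⟨.hole q⟩⟩

lemma ctxProd_hole (P : Set Q) : ctxProd M .hole P = P := by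
  ext p
  constructor
  · rintro ⟨q, hq, ⟨⟨⟩⟩⟩
    exact hq
  · exact fun hp => ⟨p, hp, ⟨.hole p⟩⟩

lemma reachStep_eq_ctxReach_node {a : A.symb} {i : Fin (A.ar a)} {c : Ctx A}
    {ts : Fin (A.ar a) → Term A} {Rs : Fin (A.ar a) → Set Q} {R : Set Q}
    (hi : Rs i = ctxReach M c R) (hj : ∀ j, j ≠ i → Rs j = reachSet M (ts j)) :
    reachStep M a Rs = ctxReach M (.node a i c ts) R := by
  ext q
  constructor
  · rintro ⟨qs, hq, hqs⟩
    obtain ⟨p, hp, ⟨hc⟩⟩ : qs i ∈ ctxReach M c R := hi ▸ hqs i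
    exact ⟨p, hp, ⟨.node a i c ts qs p q hq hc fun j hji => (hj j hji ▸ hqs j).some⟩⟩
  · rintro ⟨p, hp, ⟨_ | ⟨_, _, _, _, qs, _, _, hq, hc, rs⟩⟩⟩
    refine ⟨qs, hq, fun j => ?_⟩
    by_cases hji : j = i
    · subst hji
      exact hi ▸ ⟨p, hp, ⟨hc⟩⟩
    · exact hj j hji ▸ ⟨rs j hji⟩

lemma ctxProd_node (a : A.symb) (i : Fin (A.ar a)) (c : Ctx A) (ts : Fin (A.ar a) → Term A)
    (P : Set Q) :
    ctxProd M (.node a i c ts) P =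
      ctxProd M c (prodStep M a i (fun j => reachSet M (ts j)) P) := by
  ext p
  constructor
  · rintro ⟨q, hq, ⟨_ | ⟨_, _, _, _, qs, _, _, htr, hc, rs⟩⟩⟩
    exact ⟨qs i, ⟨qs, q, htr, rfl, fun j hj => ⟨rs j hj⟩, hq⟩, ⟨hc⟩⟩
  · rintro ⟨_, ⟨qs, q, htr, rfl, hrs, hq⟩, ⟨hc⟩⟩
    exact ⟨q, hq, ⟨.node a i c ts qs p q htr hc fun j hj => (hrs j hj).some⟩⟩

lemma ctxProd_comp (c d : Ctx A) (P : Set Q) :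
    ctxProd M (c.comp d) P = ctxProd M d (ctxProd M c P) := by
  induction c generalizing P with
  | hole => rw [Ctx.comp, ctxProd_hole]
  | node a i c ts ih => rw [Ctx.comp, ctxProd_node, ih, ← ctxProd_node]

lemma prodSet_eq_ctxProd (c : Ctx A) : prodSet M c = ctxProd M c {q | M.final q} := rfl

lemma prodSet_comp_node (c d : Ctx A) (a : A.symb) (i : Fin (A.ar a))
    (ts : Fin (A.ar a) → Term A) :
    prodSet M (c.comp (.node a i d ts)) =
      ctxProd M d (prodStep M a i (fun j => reachSet M (ts j)) (prodSet M c)) := by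
  rw [prodSet_eq_ctxProd, ctxProd_comp, ctxProd_node, ← prodSet_eq_ctxProd]

lemma prodSet_comp_node_update (c d : Ctx A) (a : A.symb) (i : Fin (A.ar a))
    (ts : Fin (A.ar a) → Term A) (t : Term A) :
    prodSet M (c.comp (.node a i d (Function.update ts i t))) =
      prodSet M (c.comp (.node a i d ts)) := by
  rw [prodSet_comp_node, prodSet_comp_node,
    prodStep_congr M fun j hj => by rw [Function.update_of_ne hj]]

lemma apro_trans_node (c : Ctx A) (a : A.symb) (ts : Fin (A.ar a) → Term A) :
    (Apro M).trans a (fun j => (reachSet M (ts j), prodSet M (c.comp (.node a j .hole ts))))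
      (reachSet M (.node a ts), prodSet M c) := by
  refine ⟨⟨reachSet_node M a ts, fun j => ?_⟩, ⟨⟨_, rfl⟩, ⟨c, rfl⟩⟩,
    fun j => ⟨⟨ts j, rfl⟩, ⟨_, rfl⟩⟩⟩
  show prodSet M _ = prodStep M a j (fun k => reachSet M (ts k)) (prodSet M c)
  rw [prodSet_comp_node, ctxProd_hole]

lemma apro_runOf_fst {t : Term A} {S : Set Q × Set Q} (r : RunOf (Apro M) t S) :
    S.1 = reachSet M t := by
  induction r with
  | node a ts qs S hq _ ih =>
    calc S.1 = reachStep M a (fun j => (qs j).1) := hq.1.1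
      _ = reachStep M a (fun j => reachSet M (ts j)) := by simp only [ih]
      _ = reachSet M (.node a ts) := (reachSet_node M a ts).symm

instance apro_runOf_subsingleton (t : Term A) (S : Set Q × Set Q) :
    Subsingleton (RunOf (Apro M) t S) := by
  induction t generalizing S with
  | node a ts ih =>
    constructor
    rintro ⟨_, _, qs, _, hq, rs⟩ ⟨_, _, qs', _, hq', rs'⟩
    obtain rfl : qs = qs' := hq.1.eq_of_fst_eq M hq'.1 fun j =>
      (apro_runOf_fst M (rs j)).trans (apro_runOf_fst M (rs' j)).symm
    obtain rfl : rs = rs' := funext fun j => Subsingleton.elim _ _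
    rfl

lemma apro_nonempty_runOf (t : Term A) (c : Ctx A) :
    Nonempty (RunOf (Apro M) t (reachSet M t, prodSet M c)) := by
  induction t generalizing c with
  | node a ts ih =>
    exact ⟨.node a ts _ _ (apro_trans_node M c a ts) fun j => (ih j _).some⟩

lemma apro_cRun_fst {c : Ctx A} {S T : Set Q × Set Q} (r : CRun (Apro M) c S T) :
    T.1 = ctxReach M c S.1 := by
  induction r with
  | hole => exact (ctxReach_hole M _).symm
  | node a i c ts qs S T hq _ rs ih =>
    rw [hq.1.1]
    exact reachStep_eq_ctxReach_node M ih fun j hj => apro_runOf_fst M (rs j hj)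

lemma apro_cRun_snd {c : Ctx A} {S T : Set Q × Set Q} (r : CRun (Apro M) c S T) :
    S.2 = ctxProd M c T.2 := by
  induction r with
  | hole => exact (ctxProd_hole M _).symm
  | node a i c ts qs S T hq _ rs ih =>
    rw [ih, hq.1.2 i, ctxProd_node]
    exact congrArg (ctxProd M c) (prodStep_congr M (fun j hj => apro_runOf_fst M (rs j hj)) _)

instance apro_cRun_subsingleton (c : Ctx A) (S T : Set Q × Set Q) :
    Subsingleton (CRun (Apro M) c S T) := by
  induction c generalizing S T with
  | hole =>
    constructor
    rintro ⟨⟩ ⟨⟩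
    rfl
  | node a i c ts ih =>
    constructor
    rintro (_ | ⟨_, _, _, _, qs, _, _, hq, hc, rs⟩)
      (_ | ⟨_, _, _, _, qs', _, _, hq', hc', rs'⟩)
    have hfst : ∀ j, (qs j).1 = (qs' j).1 := by
      intro j
      by_cases hji : j = i
      · subst hji
        rw [apro_cRun_fst M hc, apro_cRun_fst M hc']
      · rw [apro_runOf_fst M (rs j hji), apro_runOf_fst M (rs' j hji)]
    obtain rfl : qs = qs' := hq.1.eq_of_fst_eq M hq'.1 hfst
    obtain rfl : hc = hc' := Subsingleton.elim _ _
    obtain rfl : rs = rs' := funext fun j => funext fun hj => Subsingleton.elim _ _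
    rfl

lemma apro_nonempty_cRun (c d : Ctx A) (t : Term A) :
    Nonempty (CRun (Apro M) c (reachSet M t, prodSet M (d.comp c))
      (reachSet M (c.plug t), prodSet M d)) := by
  induction c generalizing d with
  | hole =>
    rw [Ctx.comp_hole]
    exact ⟨.hole _⟩
  | node a i c ts ih =>
    set ts' := Function.update ts i (c.plug t)
    have hc := (ih (d.comp (.node a i .hole ts'))).some
    rw [Ctx.comp_assoc, Ctx.comp, Ctx.comp, prodSet_comp_node_update,
      ← Function.update_self i (c.plug t) ts] at hc
    refine ⟨.node a i c ts _ _ _ (apro_trans_node M d a ts') hc fun j hj => ?_⟩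
    simpa only [ts', Function.update_of_ne hj] using (apro_nonempty_runOf M (ts' j) _).some

end ProductAutomaton

/-- for every `P ∈ Productive` and every term `t` there is exactly one
run of `A_pro` over `t` whose root state has second component `P`, and its root state is
`(Reach(t), P)`; dually, for every `R ∈ Reachable` and every context `c` there is exactly
one accepting run of `A_pro` over `c` whose hole state has first component `R`, and its
hole state is `(R, Prod(c))`. -/
theorem apro_unique_runs {A : RankedAlphabet} {Q : Type} (M : WTA A Q) :
    (∀ P ∈ ProductiveS M, ∀ t : Term A,
      Nonempty (RunOf (Apro M) t (reachSet M t, P)) ∧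
      ∀ (S S' : Set Q × Set Q) (r : RunOf (Apro M) t S) (r' : RunOf (Apro M) t S'),
        S.2 = P → S'.2 = P → S.1 = reachSet M t ∧ S = S' ∧ HEq r r') ∧
    (∀ R ∈ ReachableS M, ∀ c : Ctx A,
      (∃ Sf, (Apro M).final Sf ∧ Nonempty (CRun (Apro M) c (R, prodSet M c) Sf)) ∧
      ∀ (S S' Sf Sf' : Set Q × Set Q)
        (r : CRun (Apro M) c S Sf) (r' : CRun (Apro M) c S' Sf'),
        (Apro M).final Sf → (Apro M).final Sf' → S.1 = R → S'.1 = R →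
        S.2 = prodSet M c ∧ S = S' ∧ Sf = Sf' ∧ HEq r r') := by
  refine ⟨?_, ?_⟩
  · rintro P ⟨c, rfl⟩ t
    refine ⟨apro_nonempty_runOf M t c, fun S S' r r' hS hS' => ?_⟩
    have hS1 := apro_runOf_fst M r
    obtain rfl : S = S' := Prod.ext (hS1.trans (apro_runOf_fst M r').symm) (hS.trans hS'.symm)
    exact ⟨hS1, rfl, heq_of_eq (Subsingleton.elim r r')⟩
  · rintro R ⟨t, rfl⟩ c
    refine ⟨⟨_, ⟨ctxProd_hole M _, c.plug t, rfl⟩, apro_nonempty_cRun M c .hole t⟩, ?_⟩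
    intro S S' Sf Sf' r r' ⟨hSf, _⟩ ⟨hSf', _⟩ hS hS'
    have hS2 : S.2 = prodSet M c := by rw [apro_cRun_snd M r, hSf]; rfl
    obtain rfl : Sf = Sf' := Prod.ext
      ((apro_cRun_fst M r).trans (by rw [apro_cRun_fst M r', hS, hS'])) (hSf.trans hSf'.symm)
    obtain rfl : S = S' := Prod.ext (hS.trans hS'.symm)
      (hS2.trans (by rw [apro_cRun_snd M r', hSf]; rfl))
    exact ⟨hS2, rfl, rfl, heq_of_eq (Subsingleton.elim r r')⟩
end

section
/- Invariant of the separating automaton: if ρ is a run of A_sep over a term s to state (R, P, t), then t refines s for P with shift weight(ρ), where weight(ρ) is the sum of the weights of the transitions of ρ. -/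
section Asep
variable {A : RankedAlphabet} {Q1 Q2 : Type} (M1 : WTA A Q1) (M2 : WTA A Q2)

/-- A state `(R, P, t)` of the separating automaton is well-formed if `R ∈ Reachable`,
`P ∈ Productive`, `Reach(t) = R` and `height(t) ≤ k`. -/
def GoodState (k : ℕ) (S : Set (Q1 ⊕ Q2) × Set (Q1 ⊕ Q2) × Term A) : Prop :=
  S.1 ∈ ReachableSets M1 M2 ∧ S.2.1 ∈ ProductiveSets M1 M2 ∧
  biReach M1 M2 S.2.2 = S.1 ∧ S.2.2.height ≤ k

/-- The map `sr` is a valid refinement map: for every productive-set `P` and every term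
`s`, `sr P s = (t, x)` where `t` has height at most `k` and refines `s` for `P` with
shift `x`. -/
def GoodSr (k : ℕ) (sr : Set (Q1 ⊕ Q2) → Term A → Term A × ℝ) : Prop :=
  ∀ P ∈ ProductiveSets M1 M2, ∀ s : Term A,
    ((sr P s).1).height ≤ k ∧ Refines M1 M2 P (sr P s).1 s (sr P s).2

/-- The separating automaton `A_sep`: states are triples `(R, P, t)`, transitions follow
the product automaton `A_pro` on the first two components and apply the refinement map
`sr_P` on the third component, with the shift as transition weight; final states are the
`(R, F, t)` with `R ∩ F ≠ ∅`, of final weight `⟦A_max⟧(t)`. -/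
noncomputable def Asep (k : ℕ) (sr : Set (Q1 ⊕ Q2) → Term A → Term A × ℝ) :
    WTA A (Set (Q1 ⊕ Q2) × Set (Q1 ⊕ Q2) × Term A) where
  trans a sts out :=
    GoodState M1 M2 k out ∧ (∀ i, GoodState M1 M2 k (sts i)) ∧
    ProTrans (biTrans M1 M2) a (fun i => ((sts i).1, (sts i).2.1)) (out.1, out.2.1) ∧
    out.2.2 = (sr out.2.1 (Term.node a fun i => (sts i).2.2)).1
  wt a sts out := (sr out.2.1 (Term.node a fun i => (sts i).2.2)).2
  final S := S.2.1 = biFinal M1 M2 ∧ (S.1 ∩ biFinal M1 M2).Nonempty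
  fwt S := sSup {x | AccWeight M1 S.2.2 x}

end Asep

/-! Induct on the run. At a node `a` whose children carry states `(Rᵢ, Pᵢ, tᵢ)`, the induction
hypotheses say that each `tᵢ` refines the `i`-th subterm of `s` for `Pᵢ`. Since `A_pro` makes `Pᵢ`
the set of states at position `i` that some transition into `P` completes with states reachable on
the siblings, every run of `M1` or `M2` over `s` ending in `P` passes through `Pᵢ` at its `i`-th
child; replacing the children therefore shows that `a(t₀, …, tₙ₋₁)` refines `s`. The refinement
map `sr_P` then refines `a(t₀, …, tₙ₋₁)` further, and the two shifts add up by transitivity. -/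

section Runs
variable {A : RankedAlphabet} {Q : Type} (M : WTA A Q)

@[simp]
theorem RunOf.wt_node {a : A.symb} {ts : Fin (A.ar a) → Term A} {qs : Fin (A.ar a) → Q} {q : Q}
    (hq : M.trans a qs q) (rs : ∀ i, RunOf M (ts i) (qs i)) :
    (RunOf.node a ts qs q hq rs).wt = ∑ i, (rs i).wt + M.wt a qs q :=
  rfl

variable {a : A.symb} {ss tt : Fin (A.ar a) → Term A}

theorem reachSet_node_subset (h : ∀ i, reachSet M (ss i) ⊆ reachSet M (tt i)) :
    reachSet M (.node a ss) ⊆ reachSet M (.node a tt) := by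
  rintro q ⟨ρ⟩
  obtain ⟨_, _, qs, _, hq, rs⟩ := ρ
  exact ⟨.node a tt qs q hq fun i => (h i ⟨rs i⟩).some⟩

variable {P : Set Q} {Ps : Fin (A.ar a) → Set Q} {xs : Fin (A.ar a) → ℝ}

theorem exists_run_node_wt_le
    (hPs : ∀ qs p, M.trans a qs p → p ∈ P → (∀ j, qs j ∈ reachSet M (ss j)) → ∀ i, qs i ∈ Ps i)
    (h : ∀ i, ∀ q ∈ Ps i, ∀ ρ : RunOf M (ss i) q, ∃ ρ' : RunOf M (tt i) q, ρ.wt ≤ ρ'.wt + xs i) :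
    ∀ p ∈ P, ∀ ρ : RunOf M (.node a ss) p,
      ∃ ρ' : RunOf M (.node a tt) p, ρ.wt ≤ ρ'.wt + ∑ i, xs i := by
  rintro p hp ⟨_, _, qs, _, hq, rs⟩
  choose rs' hrs' using fun i => h i (qs i) (hPs qs p hq hp (fun j => ⟨rs j⟩) i) (rs i)
  refine ⟨.node a tt qs p hq rs', ?_⟩
  have hsum : ∑ i, (rs i).wt ≤ ∑ i, (rs' i).wt + ∑ i, xs i := by
    rw [← Finset.sum_add_distrib]
    exact Finset.sum_le_sum fun i _ => hrs' i
  simp only [RunOf.wt_node]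
  linarith

theorem exists_run_node_wt_ge
    (hPs : ∀ qs p, M.trans a qs p → p ∈ P → (∀ j, qs j ∈ reachSet M (ss j)) → ∀ i, qs i ∈ Ps i)
    (h : ∀ i, ∀ q ∈ Ps i, ∀ ρ : RunOf M (ss i) q, ∃ ρ' : RunOf M (tt i) q, ρ'.wt + xs i ≤ ρ.wt) :
    ∀ p ∈ P, ∀ ρ : RunOf M (.node a ss) p,
      ∃ ρ' : RunOf M (.node a tt) p, ρ'.wt + ∑ i, xs i ≤ ρ.wt := by
  rintro p hp ⟨_, _, qs, _, hq, rs⟩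
  choose rs' hrs' using fun i => h i (qs i) (hPs qs p hq hp (fun j => ⟨rs j⟩) i) (rs i)
  refine ⟨.node a tt qs p hq rs', ?_⟩
  have hsum : ∑ i, (rs' i).wt + ∑ i, xs i ≤ ∑ i, (rs i).wt := by
    rw [← Finset.sum_add_distrib]
    exact Finset.sum_le_sum fun i _ => hrs' i
  simp only [RunOf.wt_node]
  linarith

end Runs

section Refines
variable {A : RankedAlphabet} {Q1 Q2 : Type} {M1 : WTA A Q1} {M2 : WTA A Q2}

@[simp]
theorem inl_mem_biReach {t : Term A} {q : Q1} :
    Sum.inl q ∈ biReach M1 M2 t ↔ q ∈ reachSet M1 t := by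
  simp [biReach]

@[simp]
theorem inr_mem_biReach {t : Term A} {q : Q2} :
    Sum.inr q ∈ biReach M1 M2 t ↔ q ∈ reachSet M2 t := by
  simp [biReach]

theorem biReach_subset_iff {s t : Term A} :
    biReach M1 M2 s ⊆ biReach M1 M2 t ↔
      reachSet M1 s ⊆ reachSet M1 t ∧ reachSet M2 s ⊆ reachSet M2 t := by
  simp only [biReach, Set.union_subset_iff, Set.image_subset_iff, Set.preimage_union,
    Set.preimage_image_eq _ Sum.inl_injective, Set.preimage_image_eq _ Sum.inr_injective,
    Set.preimage_inl_image_inr, Set.preimage_inr_image_inl, Set.union_empty, Set.empty_union]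

theorem biReach_node_subset {a : A.symb} {ss tt : Fin (A.ar a) → Term A}
    (h : ∀ i, biReach M1 M2 (ss i) ⊆ biReach M1 M2 (tt i)) :
    biReach M1 M2 (.node a ss) ⊆ biReach M1 M2 (.node a tt) := by
  simp only [biReach_subset_iff] at h ⊢
  exact ⟨reachSet_node_subset M1 fun i => (h i).1, reachSet_node_subset M2 fun i => (h i).2⟩

theorem Refines.trans {P : Set (Q1 ⊕ Q2)} {t u s : Term A} {x y : ℝ}
    (htu : Refines M1 M2 P t u x) (hus : Refines M1 M2 P u s y) :
    Refines M1 M2 P t s (x + y) := by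
  refine ⟨hus.1.trans htu.1, fun p hp ρ => ?_, fun q hq τ => ?_⟩
  · obtain ⟨ρu, hρu⟩ := hus.2.1 p hp ρ
    obtain ⟨ρt, hρt⟩ := htu.2.1 p hp ρu
    exact ⟨ρt, by linarith⟩
  · obtain ⟨τu, hτu⟩ := hus.2.2 q hq τ
    obtain ⟨τt, hτt⟩ := htu.2.2 q hq τu
    exact ⟨τt, by linarith⟩

theorem Refines.node {a : A.symb} {ss tt : Fin (A.ar a) → Term A} {P : Set (Q1 ⊕ Q2)}
    {Ps : Fin (A.ar a) → Set (Q1 ⊕ Q2)} {xs : Fin (A.ar a) → ℝ}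
    (h : ∀ i, Refines M1 M2 (Ps i) (tt i) (ss i) (xs i))
    (hPs : ∀ i rs p, biTrans M1 M2 a rs p → p ∈ P →
      (∀ j, j ≠ i → rs j ∈ biReach M1 M2 (tt j)) → rs i ∈ Ps i) :
    Refines M1 M2 P (.node a tt) (.node a ss) (∑ i, xs i) := by
  have hreach : ∀ j, biReach M1 M2 (ss j) = biReach M1 M2 (tt j) := fun j => (h j).1
  refine ⟨(biReach_node_subset fun i => (hreach i).le).antisymm
      (biReach_node_subset fun i => (hreach i).ge), ?_, ?_⟩
  · refine exists_run_node_wt_le M1 (fun qs p hq hp hqs i => ?_) fun i => (h i).2.1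
    refine hPs i (Sum.inl ∘ qs) (Sum.inl p) (Or.inl ⟨qs, p, rfl, rfl, hq⟩) hp fun j _ => ?_
    simpa [← hreach j] using hqs j
  · refine exists_run_node_wt_ge M2 (fun qs p hq hp hqs i => ?_) fun i => (h i).2.2
    refine hPs i (Sum.inr ∘ qs) (Sum.inr p) (Or.inr ⟨qs, p, rfl, rfl, hq⟩) hp fun j _ => ?_
    simpa [← hreach j] using hqs j

end Refines

theorem asep_invariant_general {A : RankedAlphabet} {Q1 Q2 : Type}
    (M1 : WTA A Q1) (M2 : WTA A Q2)
    (k : ℕ) (sr : Set (Q1 ⊕ Q2) → Term A → Term A × ℝ)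
    (hsr : GoodSr M1 M2 k sr)
    (s : Term A) (S : Set (Q1 ⊕ Q2) × Set (Q1 ⊕ Q2) × Term A)
    (ρ : RunOf (Asep M1 M2 k sr) s S) :
    Refines M1 M2 S.2.1 S.2.2 s ρ.wt := by
  induction ρ with
  | node a ss sts S htrans rs ih =>
    rw [RunOf.wt_node, add_comm]
    obtain ⟨hS, hsts, hpro, hsrS⟩ := htrans
    have hchildren : Refines M1 M2 S.2.1 (.node a fun i => (sts i).2.2) (.node a ss)
        (∑ i, (rs i).wt) := by
      refine Refines.node ih fun i qs p htr hp hqs => ?_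
      rw [show (sts i).2.1 = _ from hpro.2 i]
      exact ⟨qs, p, htr, rfl, fun j hj => (hsts j).2.2.1 ▸ hqs j hj, hp⟩
    have hstep := (hsr S.2.1 hS.2.1 (.node a fun i => (sts i).2.2)).2
    rw [← hsrS] at hstep
    exact hstep.trans hchildren

/-- invariant of the separating automaton: if `ρ` is a run of `A_sep`
over a term `s` to state `(R, P, t)`, then `t` refines `s` for `P` with shift
`weight(ρ)`. -/
theorem asep_invariant {A : RankedAlphabet} {Q1 Q2 : Type}
    [Fintype Q1] [Fintype Q2] (M1 : WTA A Q1) (M2 : WTA A Q2)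
    (k : ℕ) (sr : Set (Q1 ⊕ Q2) → Term A → Term A × ℝ)
    (hsr : GoodSr M1 M2 k sr)
    (s : Term A) (S : Set (Q1 ⊕ Q2) × Set (Q1 ⊕ Q2) × Term A)
    (ρ : RunOf (Asep M1 M2 k sr) s S) :
    Refines M1 M2 S.2.1 S.2.2 s ρ.wt :=
  asep_invariant_general M1 M2 k sr hsr s S ρ
end

section
/- Pumped run weights are affine in the number of iterations: let c be a context, m a context with a run σ from q to q of weight w, t a term with a run σ'' to q of weight w'', and let σ' be an accepting run over c from q of accepting weight w'. Then for every n ≥ 0 the glued run over u_n = c ∘ m^n ∘ t is an accepting run of accepting weight w' + n·w + w''. -/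
theorem Fintype.sum_dite_eq_add_sum_ne {ι M : Type*} [Fintype ι] [DecidableEq ι] [AddCommMonoid M]
    (i : ι) (f : ∀ j, j = i → M) (g : ∀ j, j ≠ i → M) :
    ∑ j, (if h : j = i then f j h else g j h) = f i rfl + ∑ j : {j // j ≠ i}, g j j.2 := by
  rw [Fintype.sum_eq_add_sum_compl i, dif_pos rfl,
    Finset.sum_subtype _ (p := (· ≠ i)) (fun j => by simp)]
  exact congrArg _ (Finset.sum_congr rfl fun j _ => dif_neg j.2)

section Weights

variable {A : RankedAlphabet} {Q : Type} {M : WTA A Q}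

theorem RunOf.wt_cast {t t' : Term A} {q q' : Q} (ht : t = t') (hq : q = q')
    (e : RunOf M t q = RunOf M t' q') (r : RunOf M t q) : (cast e r).wt = r.wt := by
  subst ht hq
  rfl

theorem CRun.wt_glue {t : Term A} {c : Ctx A} {p q : Q} (σ : CRun M c p q) (r : RunOf M t p) :
    (σ.glue r).wt = σ.wt + r.wt := by
  induction σ with
  | hole => exact (zero_add _).symm
  | node a i c ts qs _ _ _ hc rs ih =>
    simp only [CRun.glue, RunOf.wt, CRun.wt, apply_dite RunOf.wt, Fintype.sum_dite_eq_add_sum_ne,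
      RunOf.wt_cast (Function.update_self i (c.plug t) ts).symm rfl, ih]
    rw [Fintype.sum_congr _ _ fun j : {j // j ≠ i} =>
      RunOf.wt_cast (Function.update_of_ne j.2 (c.plug t) ts).symm rfl _ (rs j j.2)]
    ring

theorem CRun.wt_cglue {c d : Ctx A} {p q r : Q} (σ : CRun M c q r) (ρ : CRun M d p q) :
    (σ.cglue ρ).wt = σ.wt + ρ.wt := by
  induction σ with
  | hole => exact (zero_add _).symm
  | node _ _ _ _ _ _ _ _ _ _ ih =>
    simp only [CRun.cglue, CRun.wt, ih]
    ring

theorem CRun.wt_pow {m : Ctx A} {q : Q} (σ : CRun M m q q) (n : ℕ) : (σ.pow n).wt = n * σ.wt := by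
  induction n with
  | zero => simp [CRun.pow, CRun.wt]
  | succ n ih =>
    calc (σ.pow (n + 1)).wt = σ.wt + (σ.pow n).wt := σ.wt_cglue (σ.pow n)
      _ = (n + 1 : ℕ) * σ.wt := by rw [ih]; push_cast; ring

end Weights

theorem pumped_weight_affine_general {A : RankedAlphabet} {Q : Type} (M : WTA A Q)
    (c m : Ctx A) (t : Term A) (q qf : Q)
    (σ' : CRun M c q qf) (σ : CRun M m q q) (σ'' : RunOf M t q) :
    ∀ n : ℕ,
      ((σ'.cglue (σ.pow n)).glue σ'').wt + M.fwt qf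
        = (σ'.wt + M.fwt qf) + n * σ.wt + σ''.wt := by
  intro n
  rw [CRun.wt_glue, CRun.wt_cglue, CRun.wt_pow]
  ring

/-- pumped run weights are affine in the number of iterations: given an
accepting run `σ'` over `c` from `q` (with final root state `qf`), a loop run `σ` over `m`
from `q` to `q`, and a run `σ''` over `t` to `q`, for every `n` the glued run over
`u_n = c ∘ mⁿ ∘ t` is accepting, of accepting weight `w' + n·w + w''`. -/
theorem pumped_weight_affine {A : RankedAlphabet} {Q : Type} (M : WTA A Q)
    (c m : Ctx A) (t : Term A) (q qf : Q) (hqf : M.final qf)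
    (σ' : CRun M c q qf) (σ : CRun M m q q) (σ'' : RunOf M t q) :
    ∀ n : ℕ,
      ((σ'.cglue (σ.pow n)).glue σ'').wt + M.fwt qf
        = (σ'.wt + M.fwt qf) + n * σ.wt + σ''.wt :=
  pumped_weight_affine_general M c m t q qf σ' σ σ''
end
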